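/- Under the conditional independence and triangular structural model assumptions, the covariate-specific reduced-form decomposition holds almost surely: E{(A − μ0(Z,X))Y | Z, X} = δ0(X)·σ²(Z,X;μ0) + cov{g0(U,X), h0(U,X) | X} + Σ_{j∈{1,2}} m_{0j}(Z,X)·cov{g_j(U,X), h0(U,X) | X} + Σ_{k∈{0,1,2}} m_{1k}(Z,X)·cov{g_k(U,X), h1(U,X) | X}, where m_{01}(Z,X) = 1 − μ0(Z,X), m_{02}(Z,X) = Z, m_{11}(Z,X) = Z{1 − μ0(Z,X)}, and m_{10}(Z,X) = m_{12}(Z,X) = Z. -/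

import Mathlib

/-!
Conditioning on `(A, Z, U, X)` and then on `(Z, U, X)`, the outcome and treatment models
together with `A² = A` turn `(A - μ0) Y` into `(H - μ0)(g0 + g2 Z) + (1 - μ0) g1 H`, where
`H = h0 + h1 Z`. Expanded with `Z² = Z`, this is a sum of terms `ψ(Z, X) Φ(U, X)` with `ψ`
bounded. Since `Z ⫫ U | X`, a function of `(U, X)` has the same conditional expectation given
`(Z, X)` as given `X`, so each term contributes `ψ(Z, X) E[Φ | X]`. The same computation applied
to `A` gives `μ0(Z, X) = E[h0 | X] + Z E[h1 | X]`, and substituting it regroups the sum into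
`δ0 μ0 (1 - μ0)` plus the conditional covariances.

The conditional-independence step is checked on the π-system of rectangles `{Z ∈ C, X ∈ B}`:
for a function `W` of `(U, X)`, pulling `W` out of `E[1{Z ∈ C} W | U, X]` reduces it to
`E[1{Z ∈ C} | U, X] = P(Z ∈ C | X)`, which on rectangles `{U ∈ D, X ∈ B}` is the factorisation
`P(Z ∈ C, U ∈ D | X) = P(Z ∈ C | X) P(U ∈ D | X)`.
-/

open MeasureTheory ProbabilityTheory MeasurableSpace

local notation "σ[" f "]" => MeasurableSpace.comap f inferInstance

section PiSystem

variable {Ω E : Type*} {m mΩ : MeasurableSpace Ω} {μ : Measure Ω} [IsFiniteMeasure μ]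
  [NormedAddCommGroup E] [NormedSpace ℝ E] [CompleteSpace E] {f g : Ω → E}

theorem ae_eq_condExp_of_setIntegral_eq_of_isPiSystem (hm : m ≤ mΩ) {C : Set (Set Ω)}
    (hgen : m = generateFrom C) (hC : IsPiSystem C) (hf : Integrable f μ) (hg : Integrable g μ)
    (hgm : StronglyMeasurable[m] g) (huniv : ∫ ω, g ω ∂μ = ∫ ω, f ω ∂μ)
    (hCeq : ∀ s ∈ C, ∫ ω in s, g ω ∂μ = ∫ ω in s, f ω ∂μ) :
    g =ᵐ[μ] μ[f | m] := by
  refine ae_eq_condExp_of_forall_setIntegral_eq hm hf (fun _ _ _ => hg.integrableOn)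
    (fun s hs _ => ?_) hgm.aestronglyMeasurable
  clear ‹μ s < ⊤›
  induction s, hs using induction_on_inter hgen hC with
  | empty => simp
  | basic s hs => exact hCeq s hs
  | compl s hs ih => rw [setIntegral_compl (hm s hs) hg, setIntegral_compl (hm s hs) hf, huniv, ih]
  | iUnion s hdisj hs ih =>
    rw [integral_iUnion (fun i => hm _ (hs i)) hdisj hg.integrableOn,
      integral_iUnion (fun i => hm _ (hs i)) hdisj hf.integrableOn]
    exact tsum_congr ih

theorem ae_eq_condExp_comap_prodMk_of_setIntegral_eq {α β : Type*} [MeasurableSpace α]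
    [MeasurableSpace β] {P : Ω → α} {Q : Ω → β} (hP : Measurable P) (hQ : Measurable Q)
    (hf : Integrable f μ) (hg : Integrable g μ) (hgm : StronglyMeasurable[σ[fun ω => (P ω, Q ω)]] g)
    (hrect : ∀ s t, MeasurableSet s → MeasurableSet t →
      ∫ ω in P ⁻¹' s ∩ Q ⁻¹' t, g ω ∂μ = ∫ ω in P ⁻¹' s ∩ Q ⁻¹' t, f ω ∂μ) :
    g =ᵐ[μ] μ[f | σ[fun ω => (P ω, Q ω)]] := by
  refine ae_eq_condExp_of_setIntegral_eq_of_isPiSystem (hP.prodMk hQ).comap_le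
    (C := Set.preimage (fun ω => (P ω, Q ω)) ''
      Set.image2 (· ×ˢ ·) {s | MeasurableSet s} {t | MeasurableSet t})
    (by rw [← generateFrom_prod, comap_generateFrom]) (isPiSystem_prod.comap _) hf hg hgm
    (by simpa using hrect _ _ MeasurableSet.univ MeasurableSet.univ) ?_
  rintro _ ⟨_, ⟨s, hs, t, ht, rfl⟩, rfl⟩
  exact hrect s t hs ht

end PiSystem

theorem setIntegral_mul_condExp {Ω : Type*} {m mΩ : MeasurableSpace Ω} {μ : Measure Ω}
    (hm : m ≤ mΩ) [SigmaFinite (μ.trim hm)] {s : Set Ω} (hs : MeasurableSet[m] s) {f g : Ω → ℝ}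
    (hg : AEStronglyMeasurable[m] g μ) (hgf : Integrable (fun ω => g ω * f ω) μ)
    (hf : Integrable f μ) :
    ∫ ω in s, g ω * (μ[f | m]) ω ∂μ = ∫ ω in s, g ω * f ω ∂μ := by
  rw [← setIntegral_condExp hm hgf hs]
  exact setIntegral_congr_ae (hm s hs)
    ((condExp_mul_of_aestronglyMeasurable_left hg hgf hf).mono fun _ h _ => h.symm)

theorem setIntegral_inter_eq_setIntegral_mul_indicator {Ω : Type*} {mΩ : MeasurableSpace Ω}
    {μ : Measure Ω} {s t : Set Ω} (ht : MeasurableSet t) (f : Ω → ℝ) :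
    ∫ ω in s ∩ t, f ω ∂μ = ∫ ω in s, f ω * t.indicator (fun _ => (1 : ℝ)) ω ∂μ := by
  rw [← setIntegral_indicator ht]
  congr 1 with ω
  by_cases h : ω ∈ t <;> simp [h]

theorem ae_norm_condExp_indicator_le_one {Ω : Type*} {m mΩ : MeasurableSpace Ω}
    {μ : Measure Ω} (s : Set Ω) : ∀ᵐ ω ∂μ, ‖(μ⟦s | m⟧) ω‖ ≤ 1 := by
  have h : ∀ᵐ ω ∂μ, |s.indicator (fun _ => (1 : ℝ)) ω| ≤ 1 :=
    ae_of_all _ fun ω => by by_cases hω : ω ∈ s <;> simp [hω]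
  simpa using ae_bdd_abs_condExp_of_ae_bdd_abs h

section CondIndep

variable {Ω β γ 𝒳 : Type*} {mΩ : MeasurableSpace Ω} [StandardBorelSpace Ω] {μ : Measure Ω}
  [IsFiniteMeasure μ] [MeasurableSpace β] [MeasurableSpace γ] [MeasurableSpace 𝒳]
  {Z : Ω → β} {U : Ω → γ} {X : Ω → 𝒳}

theorem condExp_indicator_comap_prodMk_eq_of_condIndepFun (hZ : Measurable Z)
    (hU : Measurable U) (hX : Measurable X) (hind : CondIndepFun σ[X] hX.comap_le Z U μ)
    {C : Set β} (hC : MeasurableSet C) :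
    μ⟦Z ⁻¹' C | σ[fun ω => (U ω, X ω)]⟧ =ᵐ[μ] μ⟦Z ⁻¹' C | σ[X]⟧ := by
  have hXU : σ[X] ≤ σ[fun ω => (U ω, X ω)] :=
    comap_le_comap_of_eq_comp Prod.snd measurable_snd rfl
  refine (ae_eq_condExp_comap_prodMk_of_setIntegral_eq hU hX
    ((integrable_const 1).indicator (hZ hC)) integrable_condExp
    (stronglyMeasurable_condExp.mono hXU) fun D B hD hB => ?_).symm
  have hXB : MeasurableSet[σ[X]] (X ⁻¹' B) := ⟨B, hB, rfl⟩
  have hUD : MeasurableSet (U ⁻¹' D) := hU hD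
  have hUDi : Integrable ((U ⁻¹' D).indicator (fun _ => (1 : ℝ))) μ :=
    (integrable_const 1).indicator hUD
  rw [Set.inter_comm, setIntegral_inter_eq_setIntegral_mul_indicator hUD,
    setIntegral_inter_eq_setIntegral_mul_indicator hUD]
  calc ∫ ω in X ⁻¹' B, (μ⟦Z ⁻¹' C | σ[X]⟧) ω * (U ⁻¹' D).indicator (fun _ => (1 : ℝ)) ω ∂μ
      = ∫ ω in X ⁻¹' B, (μ⟦Z ⁻¹' C | σ[X]⟧) ω * (μ⟦U ⁻¹' D | σ[X]⟧) ω ∂μ :=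
        (setIntegral_mul_condExp hX.comap_le hXB stronglyMeasurable_condExp.aestronglyMeasurable
          (hUDi.bdd_mul (stronglyMeasurable_condExp.mono hX.comap_le).aestronglyMeasurable
            (ae_norm_condExp_indicator_le_one _)) hUDi).symm
    _ = ∫ ω in X ⁻¹' B, (μ⟦Z ⁻¹' C ∩ U ⁻¹' D | σ[X]⟧) ω ∂μ :=
        setIntegral_congr_ae (hX.comap_le _ hXB)
          (((condIndepFun_iff_condExp_inter_preimage_eq_mul hZ hU).mp hind C D hC hD).mono
            fun _ h _ => h.symm)
    _ = ∫ ω in X ⁻¹' B, (Z ⁻¹' C ∩ U ⁻¹' D).indicator (fun _ => (1 : ℝ)) ω ∂μ :=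
        setIntegral_condExp hX.comap_le ((integrable_const 1).indicator ((hZ hC).inter hUD)) hXB
    _ = ∫ ω in X ⁻¹' B, (Z ⁻¹' C).indicator (fun _ => (1 : ℝ)) ω
          * (U ⁻¹' D).indicator (fun _ => (1 : ℝ)) ω ∂μ := by
        congr 1 with ω
        by_cases h₁ : ω ∈ Z ⁻¹' C <;> by_cases h₂ : ω ∈ U ⁻¹' D <;> simp [h₁, h₂]

theorem condExp_comap_prodMk_eq_of_condIndepFun (hZ : Measurable Z) (hU : Measurable U)
    (hX : Measurable X) (hind : CondIndepFun σ[X] hX.comap_le Z U μ) {W : Ω → ℝ}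
    (hW : Integrable W μ) (hWm : StronglyMeasurable[σ[fun ω => (U ω, X ω)]] W) :
    μ[W | σ[fun ω => (Z ω, X ω)]] =ᵐ[μ] μ[W | σ[X]] := by
  have hXZ : σ[X] ≤ σ[fun ω => (Z ω, X ω)] :=
    comap_le_comap_of_eq_comp Prod.snd measurable_snd rfl
  have hXU : σ[X] ≤ σ[fun ω => (U ω, X ω)] :=
    comap_le_comap_of_eq_comp Prod.snd measurable_snd rfl
  refine (ae_eq_condExp_comap_prodMk_of_setIntegral_eq hZ hX hW integrable_condExp
    (stronglyMeasurable_condExp.mono hXZ) fun C B hC hB => ?_).symm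
  have hXB : MeasurableSet[σ[X]] (X ⁻¹' B) := ⟨B, hB, rfl⟩
  have hZC : MeasurableSet (Z ⁻¹' C) := hZ hC
  have hK : Integrable ((Z ⁻¹' C).indicator (fun _ => (1 : ℝ))) μ :=
    (integrable_const 1).indicator hZC
  have hKb : ∀ᵐ ω ∂μ, ‖(Z ⁻¹' C).indicator (fun _ => (1 : ℝ)) ω‖ ≤ 1 :=
    ae_of_all _ fun ω => by by_cases h : ω ∈ Z ⁻¹' C <;> simp [h]
  have hV : AEStronglyMeasurable[σ[X]] (μ[W | σ[X]]) μ :=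
    stronglyMeasurable_condExp.aestronglyMeasurable
  have hT : AEStronglyMeasurable[σ[X]] (μ⟦Z ⁻¹' C | σ[X]⟧) μ :=
    stronglyMeasurable_condExp.aestronglyMeasurable
  rw [Set.inter_comm, setIntegral_inter_eq_setIntegral_mul_indicator hZC,
    setIntegral_inter_eq_setIntegral_mul_indicator hZC]
  calc ∫ ω in X ⁻¹' B, (μ[W | σ[X]]) ω * (Z ⁻¹' C).indicator (fun _ => (1 : ℝ)) ω ∂μ
      = ∫ ω in X ⁻¹' B, (μ[W | σ[X]]) ω * (μ⟦Z ⁻¹' C | σ[X]⟧) ω ∂μ :=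
        (setIntegral_mul_condExp hX.comap_le hXB hV
          (integrable_condExp.mul_bdd hK.aestronglyMeasurable hKb) hK).symm
    _ = ∫ ω in X ⁻¹' B, (μ⟦Z ⁻¹' C | σ[X]⟧) ω * (μ[W | σ[X]]) ω ∂μ := by
        simp_rw [mul_comm]
    _ = ∫ ω in X ⁻¹' B, (μ⟦Z ⁻¹' C | σ[X]⟧) ω * W ω ∂μ :=
        setIntegral_mul_condExp hX.comap_le hXB hT
          (hW.bdd_mul (hT.mono hX.comap_le) (ae_norm_condExp_indicator_le_one _)) hW
    _ = ∫ ω in X ⁻¹' B, W ω * (μ⟦Z ⁻¹' C | σ[fun ω => (U ω, X ω)]⟧) ω ∂μ := by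
        refine setIntegral_congr_ae (hX.comap_le _ hXB) ?_
        filter_upwards [condExp_indicator_comap_prodMk_eq_of_condIndepFun hZ hU hX hind hC]
          with ω h _
        rw [h, mul_comm]
    _ = ∫ ω in X ⁻¹' B, W ω * (Z ⁻¹' C).indicator (fun _ => (1 : ℝ)) ω ∂μ :=
        setIntegral_mul_condExp (hU.prodMk hX).comap_le (hXU _ hXB) hWm.aestronglyMeasurable
          (hW.mul_bdd hK.aestronglyMeasurable hKb) hK

theorem condExp_sum_mul_eq_of_condIndepFun {ι : Type*} [Fintype ι] (hZ : Measurable Z)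
    (hU : Measurable U) (hX : Measurable X) (hind : CondIndepFun σ[X] hX.comap_le Z U μ)
    {ψ Φ : ι → Ω → ℝ} {c : ℝ} (hψ : ∀ i, StronglyMeasurable[σ[fun ω => (Z ω, X ω)]] (ψ i))
    (hψb : ∀ i, ∀ᵐ ω ∂μ, ‖ψ i ω‖ ≤ c) (hΦ : ∀ i, StronglyMeasurable[σ[fun ω => (U ω, X ω)]] (Φ i))
    (hΦi : ∀ i, Integrable (Φ i) μ) :
    μ[fun ω => ∑ i, ψ i ω * Φ i ω | σ[fun ω => (Z ω, X ω)]]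
      =ᵐ[μ] fun ω => ∑ i, ψ i ω * (μ[Φ i | σ[X]]) ω := by
  have hZX := (hZ.prodMk hX).comap_le
  have hterm : ∀ i, μ[ψ i * Φ i | σ[fun ω => (Z ω, X ω)]] =ᵐ[μ] ψ i * μ[Φ i | σ[X]] := fun i =>
    (condExp_stronglyMeasurable_mul_of_bound hZX (hψ i) (hΦi i) c (hψb i)).trans
      (condExp_comap_prodMk_eq_of_condIndepFun hZ hU hX hind (hΦi i) (hΦ i)).mul_left
  rw [show (fun ω => ∑ i, ψ i ω * Φ i ω) = ∑ i, ψ i * Φ i by ext; simp [Finset.sum_apply]]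
  refine (condExp_finsetSum (fun i _ =>
    (hΦi i).bdd_mul ((hψ i).mono hZX).aestronglyMeasurable (hψb i)) _).trans ?_
  filter_upwards [ae_all_iff.2 hterm] with ω h
  simp only [Finset.sum_apply]
  exact Finset.sum_congr rfl fun i _ => h i

end CondIndep

theorem condExp_sub_mul_eq_of_condExp_eq_add_mul {Ω : Type*} {m₁ m₂ mΩ : MeasurableSpace Ω}
    {μ : Measure Ω} [IsFiniteMeasure μ] (h₁₂ : m₁ ≤ m₂) (h₂ : m₂ ≤ mΩ)
    {Y A N a b H : Ω → ℝ} {c : ℝ} (hA : ∀ ω, A ω = 0 ∨ A ω = 1)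
    (hAm : StronglyMeasurable[m₂] A) (hN : StronglyMeasurable[m₁] N)
    (hNb : ∀ᵐ ω ∂μ, ‖N ω‖ ≤ c) (ha : StronglyMeasurable[m₁] a) (hb : StronglyMeasurable[m₁] b)
    (hai : Integrable a μ) (hbi : Integrable b μ) (hY : Integrable Y μ)
    (hY_eq : μ[Y | m₂] =ᵐ[μ] fun ω => a ω + b ω * A ω) (hA_eq : μ[A | m₁] =ᵐ[μ] H) :
    μ[fun ω => (A ω - N ω) * Y ω | m₁]
      =ᵐ[μ] fun ω => (H ω - N ω) * a ω + (1 - N ω) * b ω * H ω := by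
  have hAb : ∀ᵐ ω ∂μ, ‖A ω‖ ≤ 1 := ae_of_all _ fun ω => by rcases hA ω with h | h <;> simp [h]
  have hAi : Integrable A μ := .of_bound (hAm.mono h₂).aestronglyMeasurable 1 hAb
  have hNm : AEStronglyMeasurable N μ := (hN.mono (h₁₂.trans h₂)).aestronglyMeasurable
  have hANb : ∀ᵐ ω ∂μ, ‖A ω - N ω‖ ≤ 1 + c := by
    filter_upwards [hAb, hNb] with ω h₁ h₂
    exact (norm_sub_le _ _).trans (add_le_add h₁ h₂)
  -- `A ^ 2 = A`: the integrand is affine in `A` with `m₁`-measurable coefficients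
  have hY₂ : μ[fun ω => (A ω - N ω) * Y ω | m₂]
      =ᵐ[μ] fun ω => -N ω * a ω + (a ω + (1 - N ω) * b ω) * A ω := by
    filter_upwards [condExp_stronglyMeasurable_mul_of_bound h₂ (hAm.sub (hN.mono h₁₂)) hY _ hANb,
      hY_eq] with ω h h'
    refine h.trans ?_
    rw [Pi.mul_apply, Pi.sub_apply, h']
    rcases hA ω with hω | hω <;> rw [hω] <;> ring
  have hlin : μ[fun ω => -N ω * a ω + (a ω + (1 - N ω) * b ω) * A ω | m₁]
      =ᵐ[μ] fun ω => -N ω * a ω + (a ω + (1 - N ω) * b ω) * (μ[A | m₁]) ω := by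
    have hNa_int : Integrable (fun ω => -N ω * a ω) μ := hai.bdd_mul hNm.neg (by simpa using hNb)
    have h1N : ∀ᵐ ω ∂μ, ‖1 - N ω‖ ≤ 1 + c := by
      filter_upwards [hNb] with ω h
      exact (norm_sub_le _ _).trans (by rw [norm_one]; linarith)
    have hcoef : Integrable (fun ω => a ω + (1 - N ω) * b ω) μ :=
      hai.add (hbi.bdd_mul (aestronglyMeasurable_const.sub hNm) h1N)
    filter_upwards [condExp_add hNa_int (hcoef.mul_bdd (hAm.mono h₂).aestronglyMeasurable hAb) m₁,
      condExp_mul_of_stronglyMeasurable_left (ha.add ((stronglyMeasurable_const.sub hN).mul hb))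
        (hcoef.mul_bdd (hAm.mono h₂).aestronglyMeasurable hAb) hAi] with ω h h'
    have hNa_meas : StronglyMeasurable[m₁] (fun ω => -N ω * a ω) := hN.neg.mul ha
    refine h.trans (congrArg₂ (· + ·) ?_ h')
    rw [condExp_of_stronglyMeasurable (h₁₂.trans h₂) hNa_meas hNa_int]
  calc μ[fun ω => (A ω - N ω) * Y ω | m₁]
      =ᵐ[μ] μ[μ[fun ω => (A ω - N ω) * Y ω | m₂] | m₁] := (condExp_condExp_of_le h₁₂ h₂).symm
    _ =ᵐ[μ] μ[fun ω => -N ω * a ω + (a ω + (1 - N ω) * b ω) * A ω | m₁] := condExp_congr_ae hY₂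
    _ =ᵐ[μ] fun ω => -N ω * a ω + (a ω + (1 - N ω) * b ω) * (μ[A | m₁]) ω := hlin
    _ =ᵐ[μ] fun ω => (H ω - N ω) * a ω + (1 - N ω) * b ω * H ω := by
      filter_upwards [hA_eq] with ω h
      rw [h]
      ring

section StructuralModel

variable {Ω 𝒳 𝒰 : Type*} {mΩ : MeasurableSpace Ω} [MeasurableSpace 𝒳] [MeasurableSpace 𝒰]
  {μ : Measure Ω} [IsFiniteMeasure μ] {Y A Z : Ω → ℝ} {X : Ω → 𝒳} {U : Ω → 𝒰}
  {g0 g1 g2 h0 h1 : 𝒰 × 𝒳 → ℝ} {N : ℝ × 𝒳 → ℝ}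

theorem condExp_comap_prodMk_eq_of_condExp_eq_add_mul [StandardBorelSpace Ω]
    (hZ : Measurable Z) (hU : Measurable U) (hX : Measurable X) (hZ1 : ∀ ω, ‖Z ω‖ ≤ 1)
    (hind : CondIndepFun σ[X] hX.comap_le Z U μ)
    (hh0 : Measurable h0) (hh1 : Measurable h1)
    (hh0i : Integrable (fun ω => h0 (U ω, X ω)) μ) (hh1i : Integrable (fun ω => h1 (U ω, X ω)) μ)
    (hA : μ[A | σ[fun ω => (Z ω, U ω, X ω)]]
      =ᵐ[μ] fun ω => h0 (U ω, X ω) + h1 (U ω, X ω) * Z ω) :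
    μ[A | σ[fun ω => (Z ω, X ω)]] =ᵐ[μ] fun ω =>
      (μ[fun ω => h0 (U ω, X ω) | σ[X]]) ω + Z ω * (μ[fun ω => h1 (U ω, X ω) | σ[X]]) ω := by
  have hsum := condExp_sum_mul_eq_of_condIndepFun hZ hU hX hind (c := 1)
    (ψ := ![fun _ => 1, Z]) (Φ := ![fun ω => h0 (U ω, X ω), fun ω => h1 (U ω, X ω)])
    (Fin.forall_fin_two.2 ⟨stronglyMeasurable_const,
      (measurable_fst.comp (comap_measurable _)).stronglyMeasurable⟩)
    (Fin.forall_fin_two.2 ⟨ae_of_all _ (by simp), ae_of_all _ hZ1⟩)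
    (Fin.forall_fin_two.2 ⟨(hh0.comp (comap_measurable _)).stronglyMeasurable,
      (hh1.comp (comap_measurable _)).stronglyMeasurable⟩)
    (Fin.forall_fin_two.2 ⟨hh0i, hh1i⟩)
  simp only [Fin.sum_univ_two, Matrix.cons_val_zero, Matrix.cons_val_one, one_mul] at hsum
  refine (condExp_condExp_of_le
    (comap_le_comap_of_eq_comp (fun q : ℝ × 𝒰 × 𝒳 => (q.1, q.2.2)) (by fun_prop) rfl)
    (hZ.prodMk (hU.prodMk hX)).comap_le).symm.trans
    ((condExp_congr_ae (hA.trans (ae_of_all _ fun ω => ?_))).trans hsum)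
  ring

theorem condExp_sub_mul_comap_prodMk_eq (hA : Measurable A) (hZ : Measurable Z)
    (hU : Measurable U) (hX : Measurable X) (hAbin : ∀ ω, A ω = 0 ∨ A ω = 1)
    (hZ1 : ∀ ω, ‖Z ω‖ ≤ 1) (hg0 : Measurable g0) (hg1 : Measurable g1) (hg2 : Measurable g2)
    (hg0i : Integrable (fun ω => g0 (U ω, X ω)) μ) (hg1i : Integrable (fun ω => g1 (U ω, X ω)) μ)
    (hg2i : Integrable (fun ω => g2 (U ω, X ω)) μ) (hN : Measurable N)
    (hN1 : ∀ᵐ ω ∂μ, ‖N (Z ω, X ω)‖ ≤ 1) (hY : Integrable Y μ)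
    (hY_eq : μ[Y | σ[fun ω => (A ω, Z ω, U ω, X ω)]]
      =ᵐ[μ] fun ω => g0 (U ω, X ω) + g1 (U ω, X ω) * A ω + g2 (U ω, X ω) * Z ω)
    (hA_eq : μ[A | σ[fun ω => (Z ω, U ω, X ω)]]
      =ᵐ[μ] fun ω => h0 (U ω, X ω) + h1 (U ω, X ω) * Z ω) :
    μ[fun ω => (A ω - N (Z ω, X ω)) * Y ω | σ[fun ω => (Z ω, X ω)]]
      =ᵐ[μ] μ[fun ω => (h0 (U ω, X ω) + h1 (U ω, X ω) * Z ω - N (Z ω, X ω))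
          * (g0 (U ω, X ω) + g2 (U ω, X ω) * Z ω)
        + (1 - N (Z ω, X ω)) * g1 (U ω, X ω) * (h0 (U ω, X ω) + h1 (U ω, X ω) * Z ω)
        | σ[fun ω => (Z ω, X ω)]] := by
  have hZUX : σ[fun ω => (Z ω, U ω, X ω)] ≤ σ[fun ω => (A ω, Z ω, U ω, X ω)] :=
    comap_le_comap_of_eq_comp Prod.snd measurable_snd rfl
  refine (condExp_condExp_of_le
    (comap_le_comap_of_eq_comp (fun q : ℝ × 𝒰 × 𝒳 => (q.1, q.2.2)) (by fun_prop) rfl)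
    (hZ.prodMk (hU.prodMk hX)).comap_le).symm.trans (condExp_congr_ae ?_)
  exact condExp_sub_mul_eq_of_condExp_eq_add_mul hZUX
    (hA.prodMk (hZ.prodMk (hU.prodMk hX))).comap_le hAbin
    (measurable_fst.comp (comap_measurable _)).stronglyMeasurable
    ((by fun_prop : Measurable fun q : ℝ × 𝒰 × 𝒳 => N (q.1, q.2.2)).comp
      (comap_measurable _)).stronglyMeasurable hN1
    (a := fun ω => g0 (U ω, X ω) + g2 (U ω, X ω) * Z ω) (b := fun ω => g1 (U ω, X ω))
    ((by fun_prop : Measurable fun q : ℝ × 𝒰 × 𝒳 => g0 q.2 + g2 q.2 * q.1).comp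
      (comap_measurable _)).stronglyMeasurable
    ((hg1.comp measurable_snd).comp (comap_measurable _)).stronglyMeasurable
    (hg0i.add (hg2i.mul_bdd hZ.aestronglyMeasurable (ae_of_all _ hZ1))) hg1i hY
    (hY_eq.trans (ae_of_all _ fun ω => by ring)) hA_eq

theorem condExp_comap_prodMk_structural_eq [StandardBorelSpace Ω] (hZ : Measurable Z)
    (hU : Measurable U) (hX : Measurable X) (hZbin : ∀ ω, Z ω = 0 ∨ Z ω = 1)
    (hind : CondIndepFun σ[X] hX.comap_le Z U μ)
    (hg0 : Measurable g0) (hg1 : Measurable g1) (hg2 : Measurable g2)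
    (hh0 : Measurable h0) (hh1 : Measurable h1)
    (hg0L2 : MemLp (fun ω => g0 (U ω, X ω)) 2 μ) (hg1L2 : MemLp (fun ω => g1 (U ω, X ω)) 2 μ)
    (hg2L2 : MemLp (fun ω => g2 (U ω, X ω)) 2 μ) (hh0L2 : MemLp (fun ω => h0 (U ω, X ω)) 2 μ)
    (hh1L2 : MemLp (fun ω => h1 (U ω, X ω)) 2 μ)
    (hN : Measurable N) (hN1 : ∀ᵐ ω ∂μ, ‖N (Z ω, X ω)‖ ≤ 1) :
    μ[fun ω => (h0 (U ω, X ω) + h1 (U ω, X ω) * Z ω - N (Z ω, X ω))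
          * (g0 (U ω, X ω) + g2 (U ω, X ω) * Z ω)
        + (1 - N (Z ω, X ω)) * g1 (U ω, X ω) * (h0 (U ω, X ω) + h1 (U ω, X ω) * Z ω)
        | σ[fun ω => (Z ω, X ω)]]
      =ᵐ[μ] fun ω =>
        (μ[fun ω => g0 (U ω, X ω) * h0 (U ω, X ω) | σ[X]]) ω
        + Z ω * ((μ[fun ω => g0 (U ω, X ω) * h1 (U ω, X ω) | σ[X]]) ω
          + (μ[fun ω => g2 (U ω, X ω) * h0 (U ω, X ω) | σ[X]]) ω
          + (μ[fun ω => g2 (U ω, X ω) * h1 (U ω, X ω) | σ[X]]) ω)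
        - N (Z ω, X ω) * ((μ[fun ω => g0 (U ω, X ω) | σ[X]]) ω
          + Z ω * (μ[fun ω => g2 (U ω, X ω) | σ[X]]) ω)
        + (1 - N (Z ω, X ω))
          * ((μ[fun ω => g1 (U ω, X ω) * h0 (U ω, X ω) | σ[X]]) ω
          + Z ω * (μ[fun ω => g1 (U ω, X ω) * h1 (U ω, X ω) | σ[X]]) ω) := by
  -- the integrand, expanded with `Z ^ 2 = Z`, is `∑ i, ψ i (Z, X) * Φ i (U, X)`
  let ψ : Fin 8 → ℝ × 𝒳 → ℝ := ![fun _ => 1, Prod.fst, Prod.fst, Prod.fst, fun q => -N q,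
    fun q => -(N q * q.1), fun q => 1 - N q, fun q => (1 - N q) * q.1]
  let Φ : Fin 8 → 𝒰 × 𝒳 → ℝ := ![g0 * h0, g0 * h1, g2 * h0, g2 * h1, g0, g2, g1 * h0, g1 * h1]
  have hψ : ∀ i, Measurable (ψ i) := by
    intro i
    fin_cases i <;> dsimp only [ψ, Fin.reduceFinMk, Matrix.cons_val] <;> fun_prop
  have hΦ : ∀ i, Measurable (Φ i) := by
    intro i
    fin_cases i <;> dsimp only [Φ, Fin.reduceFinMk, Matrix.cons_val] <;> fun_prop
  have hψb : ∀ i, ∀ᵐ ω ∂μ, ‖ψ i (Z ω, X ω)‖ ≤ 2 := by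
    intro i
    filter_upwards [hN1] with ω hω
    rw [Real.norm_eq_abs, abs_le] at hω
    have hz : 0 ≤ Z ω ∧ Z ω ≤ 1 := by rcases hZbin ω with h | h <;> simp [h]
    fin_cases i <;> dsimp only [ψ, Fin.reduceFinMk, Matrix.cons_val] <;>
      rw [Real.norm_eq_abs, abs_le] <;> constructor <;> nlinarith
  have hΦi : ∀ i, Integrable (fun ω => Φ i (U ω, X ω)) μ := by
    intro i
    fin_cases i
    exacts [hg0L2.integrable_mul hh0L2, hg0L2.integrable_mul hh1L2, hg2L2.integrable_mul hh0L2,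
      hg2L2.integrable_mul hh1L2, hg0L2.integrable one_le_two, hg2L2.integrable one_le_two,
      hg1L2.integrable_mul hh0L2, hg1L2.integrable_mul hh1L2]
  have hsum := condExp_sum_mul_eq_of_condIndepFun hZ hU hX hind
    (ψ := fun i ω => ψ i (Z ω, X ω)) (Φ := fun i ω => Φ i (U ω, X ω))
    (fun i => ((hψ i).comp (comap_measurable _)).stronglyMeasurable) hψb
    (fun i => ((hΦ i).comp (comap_measurable _)).stronglyMeasurable) hΦi
  simp only [Fin.sum_univ_eight, ψ, Φ, Matrix.cons_val, Pi.mul_apply] at hsum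
  refine (condExp_congr_ae (ae_of_all _ fun ω => ?_)).trans (hsum.trans (ae_of_all _ fun ω => ?_))
  · rcases hZbin ω with hz | hz <;> simp only [hz] <;> ring
  · ring

end StructuralModel

theorem stmt3_general
    {Ω 𝒳 𝒰 : Type*} [mΩ : MeasurableSpace Ω] [StandardBorelSpace Ω]
    [MeasurableSpace 𝒳] [MeasurableSpace 𝒰]
    (μ : Measure Ω) [IsProbabilityMeasure μ]
    (Y A Z : Ω → ℝ) (X : Ω → 𝒳) (U : Ω → 𝒰)
    (hAm : Measurable A) (hZm : Measurable Z)
    (hXm : Measurable X) (hUm : Measurable U)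
    (hAbin : ∀ ω, A ω = 0 ∨ A ω = 1) (hZbin : ∀ ω, Z ω = 0 ∨ Z ω = 1)
    (hYint : Integrable Y μ)
    -- structural functions
    (g0 g1 g2 h0 h1 : 𝒰 × 𝒳 → ℝ)
    (hg0 : Measurable g0) (hg1 : Measurable g1) (hg2 : Measurable g2)
    (hh0 : Measurable h0) (hh1 : Measurable h1)
    (hg0L2 : MemLp (fun ω => g0 (U ω, X ω)) 2 μ) (hg1L2 : MemLp (fun ω => g1 (U ω, X ω)) 2 μ)
    (hg2L2 : MemLp (fun ω => g2 (U ω, X ω)) 2 μ) (hh0L2 : MemLp (fun ω => h0 (U ω, X ω)) 2 μ)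
    (hh1L2 : MemLp (fun ω => h1 (U ω, X ω)) 2 μ)
    -- (A9) conditional independence: Z ⫫ U | X
    (hXle : MeasurableSpace.comap X inferInstance ≤ mΩ)
    (hA9 : CondIndepFun (MeasurableSpace.comap X inferInstance) hXle Z U μ)
    -- (A10) triangular structural models
    (hA10Y :
      μ[Y | MeasurableSpace.comap (fun ω => (A ω, Z ω, U ω, X ω)) inferInstance]
        =ᵐ[μ] fun ω => g0 (U ω, X ω) + g1 (U ω, X ω) * A ω + g2 (U ω, X ω) * Z ω)
    (hA10A :
      μ[A | MeasurableSpace.comap (fun ω => (Z ω, U ω, X ω)) inferInstance]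
        =ᵐ[μ] fun ω => h0 (U ω, X ω) + h1 (U ω, X ω) * Z ω)
    -- propensity score μ0(z,x) = P(A=1|Z=z,X=x)
    (μ0 : ℝ × 𝒳 → ℝ) (hμ0m : Measurable μ0)
    (hμ0 : μ[A | MeasurableSpace.comap (fun ω => (Z ω, X ω)) inferInstance]
      =ᵐ[μ] fun ω => μ0 (Z ω, X ω))
    -- conditional average treatment effect δ0(x) = E{g1(U,X)|X=x}
    (δ0 : 𝒳 → ℝ)
    (hδ0 : μ[fun ω => g1 (U ω, X ω) | MeasurableSpace.comap X inferInstance]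
      =ᵐ[μ] fun ω => δ0 (X ω))
    -- conditional covariance functions c_{jk}(x) = cov{g_j(U,X), h_k(U,X) | X=x}
    (c00 c10 c20 c01 c11 c21 : 𝒳 → ℝ)
    (hc00 : (fun ω => c00 (X ω)) =ᵐ[μ] fun ω =>
      (μ[fun ω => g0 (U ω, X ω) * h0 (U ω, X ω) | MeasurableSpace.comap X inferInstance]) ω
      - (μ[fun ω => g0 (U ω, X ω) | MeasurableSpace.comap X inferInstance]) ω
        * (μ[fun ω => h0 (U ω, X ω) | MeasurableSpace.comap X inferInstance]) ω)
    (hc10 : (fun ω => c10 (X ω)) =ᵐ[μ] fun ω =>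
      (μ[fun ω => g1 (U ω, X ω) * h0 (U ω, X ω) | MeasurableSpace.comap X inferInstance]) ω
      - (μ[fun ω => g1 (U ω, X ω) | MeasurableSpace.comap X inferInstance]) ω
        * (μ[fun ω => h0 (U ω, X ω) | MeasurableSpace.comap X inferInstance]) ω)
    (hc20 : (fun ω => c20 (X ω)) =ᵐ[μ] fun ω =>
      (μ[fun ω => g2 (U ω, X ω) * h0 (U ω, X ω) | MeasurableSpace.comap X inferInstance]) ω
      - (μ[fun ω => g2 (U ω, X ω) | MeasurableSpace.comap X inferInstance]) ω
        * (μ[fun ω => h0 (U ω, X ω) | MeasurableSpace.comap X inferInstance]) ω)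
    (hc01 : (fun ω => c01 (X ω)) =ᵐ[μ] fun ω =>
      (μ[fun ω => g0 (U ω, X ω) * h1 (U ω, X ω) | MeasurableSpace.comap X inferInstance]) ω
      - (μ[fun ω => g0 (U ω, X ω) | MeasurableSpace.comap X inferInstance]) ω
        * (μ[fun ω => h1 (U ω, X ω) | MeasurableSpace.comap X inferInstance]) ω)
    (hc11 : (fun ω => c11 (X ω)) =ᵐ[μ] fun ω =>
      (μ[fun ω => g1 (U ω, X ω) * h1 (U ω, X ω) | MeasurableSpace.comap X inferInstance]) ω
      - (μ[fun ω => g1 (U ω, X ω) | MeasurableSpace.comap X inferInstance]) ω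
        * (μ[fun ω => h1 (U ω, X ω) | MeasurableSpace.comap X inferInstance]) ω)
    (hc21 : (fun ω => c21 (X ω)) =ᵐ[μ] fun ω =>
      (μ[fun ω => g2 (U ω, X ω) * h1 (U ω, X ω) | MeasurableSpace.comap X inferInstance]) ω
      - (μ[fun ω => g2 (U ω, X ω) | MeasurableSpace.comap X inferInstance]) ω
        * (μ[fun ω => h1 (U ω, X ω) | MeasurableSpace.comap X inferInstance]) ω) :
    -- conclusion : the reduced-form decomposition, almost surely
    μ[fun ω => (A ω - μ0 (Z ω, X ω)) * Y ω |
        MeasurableSpace.comap (fun ω => (Z ω, X ω)) inferInstance]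
      =ᵐ[μ] fun ω =>
        δ0 (X ω) * (μ0 (Z ω, X ω) * (1 - μ0 (Z ω, X ω)))
        + c00 (X ω)
        + ((1 - μ0 (Z ω, X ω)) * c10 (X ω) + Z ω * c20 (X ω))
        + (Z ω * c01 (X ω) + Z ω * (1 - μ0 (Z ω, X ω)) * c11 (X ω) + Z ω * c21 (X ω)) := by
  have hZ1 : ∀ ω, ‖Z ω‖ ≤ 1 := fun ω => by rcases hZbin ω with h | h <;> simp [h]
  have hN1 : ∀ᵐ ω ∂μ, ‖μ0 (Z ω, X ω)‖ ≤ 1 := by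
    have hA1 : ∀ᵐ ω ∂μ, |A ω| ≤ 1 :=
      ae_of_all _ fun ω => by rcases hAbin ω with h | h <;> simp [h]
    filter_upwards [hμ0, ae_bdd_abs_condExp_of_ae_bdd_abs hA1] with ω h h'
    rwa [← h]
  have hμ0_eq := hμ0.symm.trans (condExp_comap_prodMk_eq_of_condExp_eq_add_mul hZm hUm hXm hZ1
    hA9 hh0 hh1 (hh0L2.integrable one_le_two) (hh1L2.integrable one_le_two) hA10A)
  refine (condExp_sub_mul_comap_prodMk_eq hAm hZm hUm hXm hAbin hZ1 hg0 hg1 hg2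
    (hg0L2.integrable one_le_two) (hg1L2.integrable one_le_two) (hg2L2.integrable one_le_two)
    hμ0m hN1 hYint hA10Y hA10A).trans
    ((condExp_comap_prodMk_structural_eq hZm hUm hXm hZbin hA9 hg0 hg1 hg2 hh0 hh1
      hg0L2 hg1L2 hg2L2 hh0L2 hh1L2 hμ0m hN1).trans ?_)
  filter_upwards [hμ0_eq, hδ0, hc00, hc10, hc20, hc01, hc11, hc21]
    with ω hN hδ h00 h10 h20 h01 h11 h21
  rw [h00, h10, h20, h01, h11, h21, ← hδ, hN]
  rcases hZbin ω with hz | hz <;> rw [hz] <;> ring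

/-- Under conditional independence (A9) and the triangular structural models
(A10), the covariate-specific reduced-form decomposition holds almost surely:
`E{(A − μ0(Z,X))Y | Z, X} = δ0(X)σ²(Z,X;μ0) + cov{g0,h0|X} + Σ_j m_{0j}(Z,X)·cov{g_j,h0|X}
  + Σ_k m_{1k}(Z,X)·cov{g_k,h1|X}`,
with `m_{01} = 1−μ0(Z,X)`, `m_{02} = Z`, `m_{11} = Z(1−μ0(Z,X))`, `m_{10} = m_{12} = Z`. -/
theorem stmt3
    {Ω 𝒳 𝒰 : Type*} [mΩ : MeasurableSpace Ω] [StandardBorelSpace Ω] [Nonempty Ω]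
    [MeasurableSpace 𝒳] [MeasurableSpace 𝒰]
    (μ : Measure Ω) [IsProbabilityMeasure μ]
    (Y A Z : Ω → ℝ) (X : Ω → 𝒳) (U : Ω → 𝒰)
    (hYm : Measurable Y) (hAm : Measurable A) (hZm : Measurable Z)
    (hXm : Measurable X) (hUm : Measurable U)
    (hAbin : ∀ ω, A ω = 0 ∨ A ω = 1) (hZbin : ∀ ω, Z ω = 0 ∨ Z ω = 1)
    (hYint : Integrable Y μ)
    -- structural functions
    (g0 g1 g2 h0 h1 : 𝒰 × 𝒳 → ℝ)
    (hg0 : Measurable g0) (hg1 : Measurable g1) (hg2 : Measurable g2)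
    (hh0 : Measurable h0) (hh1 : Measurable h1)
    (hg0L2 : MemLp (fun ω => g0 (U ω, X ω)) 2 μ) (hg1L2 : MemLp (fun ω => g1 (U ω, X ω)) 2 μ)
    (hg2L2 : MemLp (fun ω => g2 (U ω, X ω)) 2 μ) (hh0L2 : MemLp (fun ω => h0 (U ω, X ω)) 2 μ)
    (hh1L2 : MemLp (fun ω => h1 (U ω, X ω)) 2 μ)
    -- (A9) conditional independence: Z ⫫ U | X
    (hXle : MeasurableSpace.comap X inferInstance ≤ mΩ)
    (hA9 : CondIndepFun (MeasurableSpace.comap X inferInstance) hXle Z U μ)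
    -- (A10) triangular structural models
    (hA10Y :
      μ[Y | MeasurableSpace.comap (fun ω => (A ω, Z ω, U ω, X ω)) inferInstance]
        =ᵐ[μ] fun ω => g0 (U ω, X ω) + g1 (U ω, X ω) * A ω + g2 (U ω, X ω) * Z ω)
    (hA10A :
      μ[A | MeasurableSpace.comap (fun ω => (Z ω, U ω, X ω)) inferInstance]
        =ᵐ[μ] fun ω => h0 (U ω, X ω) + h1 (U ω, X ω) * Z ω)
    -- propensity score μ0(z,x) = P(A=1|Z=z,X=x)
    (μ0 : ℝ × 𝒳 → ℝ) (hμ0m : Measurable μ0)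
    (hμ0 : μ[A | MeasurableSpace.comap (fun ω => (Z ω, X ω)) inferInstance]
      =ᵐ[μ] fun ω => μ0 (Z ω, X ω))
    -- conditional average treatment effect δ0(x) = E{g1(U,X)|X=x}
    (δ0 : 𝒳 → ℝ) (hδ0m : Measurable δ0)
    (hδ0 : μ[fun ω => g1 (U ω, X ω) | MeasurableSpace.comap X inferInstance]
      =ᵐ[μ] fun ω => δ0 (X ω))
    -- conditional covariance functions c_{jk}(x) = cov{g_j(U,X), h_k(U,X) | X=x}
    (c00 c10 c20 c01 c11 c21 : 𝒳 → ℝ)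
    (hc00m : Measurable c00) (hc10m : Measurable c10) (hc20m : Measurable c20)
    (hc01m : Measurable c01) (hc11m : Measurable c11) (hc21m : Measurable c21)
    (hc00 : (fun ω => c00 (X ω)) =ᵐ[μ] fun ω =>
      (μ[fun ω => g0 (U ω, X ω) * h0 (U ω, X ω) | MeasurableSpace.comap X inferInstance]) ω
      - (μ[fun ω => g0 (U ω, X ω) | MeasurableSpace.comap X inferInstance]) ω
        * (μ[fun ω => h0 (U ω, X ω) | MeasurableSpace.comap X inferInstance]) ω)
    (hc10 : (fun ω => c10 (X ω)) =ᵐ[μ] fun ω =>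
      (μ[fun ω => g1 (U ω, X ω) * h0 (U ω, X ω) | MeasurableSpace.comap X inferInstance]) ω
      - (μ[fun ω => g1 (U ω, X ω) | MeasurableSpace.comap X inferInstance]) ω
        * (μ[fun ω => h0 (U ω, X ω) | MeasurableSpace.comap X inferInstance]) ω)
    (hc20 : (fun ω => c20 (X ω)) =ᵐ[μ] fun ω =>
      (μ[fun ω => g2 (U ω, X ω) * h0 (U ω, X ω) | MeasurableSpace.comap X inferInstance]) ω
      - (μ[fun ω => g2 (U ω, X ω) | MeasurableSpace.comap X inferInstance]) ω
        * (μ[fun ω => h0 (U ω, X ω) | MeasurableSpace.comap X inferInstance]) ω)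
    (hc01 : (fun ω => c01 (X ω)) =ᵐ[μ] fun ω =>
      (μ[fun ω => g0 (U ω, X ω) * h1 (U ω, X ω) | MeasurableSpace.comap X inferInstance]) ω
      - (μ[fun ω => g0 (U ω, X ω) | MeasurableSpace.comap X inferInstance]) ω
        * (μ[fun ω => h1 (U ω, X ω) | MeasurableSpace.comap X inferInstance]) ω)
    (hc11 : (fun ω => c11 (X ω)) =ᵐ[μ] fun ω =>
      (μ[fun ω => g1 (U ω, X ω) * h1 (U ω, X ω) | MeasurableSpace.comap X inferInstance]) ω
      - (μ[fun ω => g1 (U ω, X ω) | MeasurableSpace.comap X inferInstance]) ω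
        * (μ[fun ω => h1 (U ω, X ω) | MeasurableSpace.comap X inferInstance]) ω)
    (hc21 : (fun ω => c21 (X ω)) =ᵐ[μ] fun ω =>
      (μ[fun ω => g2 (U ω, X ω) * h1 (U ω, X ω) | MeasurableSpace.comap X inferInstance]) ω
      - (μ[fun ω => g2 (U ω, X ω) | MeasurableSpace.comap X inferInstance]) ω
        * (μ[fun ω => h1 (U ω, X ω) | MeasurableSpace.comap X inferInstance]) ω)
    -- integrability of the reduced-form left-hand side
    (hwint : Integrable (fun ω => (A ω - μ0 (Z ω, X ω)) * Y ω) μ) :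
    -- conclusion : the reduced-form decomposition, almost surely
    μ[fun ω => (A ω - μ0 (Z ω, X ω)) * Y ω |
        MeasurableSpace.comap (fun ω => (Z ω, X ω)) inferInstance]
      =ᵐ[μ] fun ω =>
        δ0 (X ω) * (μ0 (Z ω, X ω) * (1 - μ0 (Z ω, X ω)))
        + c00 (X ω)
        + ((1 - μ0 (Z ω, X ω)) * c10 (X ω) + Z ω * c20 (X ω))
        + (Z ω * c01 (X ω) + Z ω * (1 - μ0 (Z ω, X ω)) * c11 (X ω) + Z ω * c21 (X ω)) :=
  stmt3_general (mΩ := mΩ) μ Y A Z X U hAm hZm hXm hUm hAbin hZbin hYint g0 g1 g2 h0 h1 hg0 hg1 hg2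
    hh0 hh1 hg0L2 hg1L2 hg2L2 hh0L2 hh1L2 hXle hA9 hA10Y hA10A μ0 hμ0m hμ0 δ0 hδ0 c00 c10 c20 c01
    c11 c21 hc00 hc10 hc20 hc01 hc11 hc21
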